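/- Let (H_X, H_Z) be a CSS code that has at least one Z logical operator, with Z distance d_Z, and let H_C ∈ F₂^{(n_c−k_c) × n_c} be a classical parity check matrix of full row rank. Let H'_X, H'_Z be the check matrices of the generalized thickened code. Then every z ∈ ker(H'_X) \ rowspan(H'_Z) satisfies |z_A|_R ≥ d_Z; in particular |supp(z_A)| ≥ d_Z. Equivalently, if z ∈ ker(H'_X) and |z_A|_R < d_Z, then z ∈ rowspan(H'_Z). -/
import Mathlib


open Matrix

/-- The `F₂`-span of the rows of a matrix. -/
noncomputable def rowSpan {ι κ : Type*} [Fintype ι] [Fintype κ] (M : Matrix ι κ (ZMod 2)) :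
    Submodule (ZMod 2) (κ → ZMod 2) :=
  Submodule.span (ZMod 2) (Set.range fun i => M i)

/-- The kernel `{v : M v = 0}` of a matrix, as a submodule. -/
noncomputable def kerMat {ι κ : Type*} [Fintype ι] [Fintype κ] (M : Matrix ι κ (ZMod 2)) :
    Submodule (ZMod 2) (κ → ZMod 2) :=
  LinearMap.ker M.mulVecLin

/-- The logical operators `ker(Hker) \ rowspan(Hspan)`. -/
def logicalSet {ι₁ ι₂ κ : Type*} [Fintype ι₁] [Fintype ι₂] [Fintype κ]
    (Hker : Matrix ι₁ κ (ZMod 2)) (Hspan : Matrix ι₂ κ (ZMod 2)) : Set (κ → ZMod 2) :=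
  {v | Hker.mulVec v = 0 ∧ v ∉ rowSpan Hspan}

/-- Minimum Hamming weight over a set of vectors. -/
noncomputable def minWt {ι : Type*} [Fintype ι] (S : Set (ι → ZMod 2)) : ℕ :=
  sInf (hammingNorm '' S)

/-- X check matrix of the generalized thickened code: `( H_X ⊗ I_{n_c} | I_{n_X} ⊗ H_Cᵀ )`.
Region A qubits are indexed by `Fin n × Fin nc`, region B qubits by `Fin nX × Fin r`. -/
def thickX {nX n r nc : ℕ} (HX : Matrix (Fin nX) (Fin n) (ZMod 2))
    (HC : Matrix (Fin r) (Fin nc) (ZMod 2)) :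
    Matrix (Fin nX × Fin nc) ((Fin n × Fin nc) ⊕ (Fin nX × Fin r)) (ZMod 2) :=
  Matrix.of fun s p =>
    match p with
    | Sum.inl (i, c) => if c = s.2 then HX s.1 i else 0
    | Sum.inr (x, j) => if x = s.1 then HC j s.2 else 0

/-- Z check matrix of the generalized thickened code:
first block row `( H_Z ⊗ I_{n_c} | 0 )`,
second block row `( I_n ⊗ H_C | H_Xᵀ ⊗ I_{n_c-k_c} )`. -/
def thickZ {nX nZ n r nc : ℕ} (HX : Matrix (Fin nX) (Fin n) (ZMod 2))
    (HZ : Matrix (Fin nZ) (Fin n) (ZMod 2)) (HC : Matrix (Fin r) (Fin nc) (ZMod 2)) :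
    Matrix ((Fin nZ × Fin nc) ⊕ (Fin n × Fin r)) ((Fin n × Fin nc) ⊕ (Fin nX × Fin r)) (ZMod 2) :=
  Matrix.of fun s p =>
    match s, p with
    | Sum.inl (z, c), Sum.inl (i, c') => if c' = c then HZ z i else 0
    | Sum.inl _, Sum.inr _ => 0
    | Sum.inr (i, j), Sum.inl (i', c) => if i' = i then HC j c else 0
    | Sum.inr (i, j), Sum.inr (x, j') => if j' = j then HX x i else 0

/-- Number of nonzero columns of the region-A part of a vector on the thickened qubits. -/
noncomputable def colWtA {n nc nX r : ℕ}
    (w : ((Fin n × Fin nc) ⊕ (Fin nX × Fin r)) → ZMod 2) : ℕ :=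
  (Finset.univ.filter fun c : Fin nc => ∃ i : Fin n, w (Sum.inl (i, c)) ≠ 0).card

/-- Number of nonzero rows of the region-A part of a vector on the thickened qubits. -/
noncomputable def rowWtA {n nc nX r : ℕ}
    (w : ((Fin n × Fin nc) ⊕ (Fin nX × Fin r)) → ZMod 2) : ℕ :=
  (Finset.univ.filter fun i : Fin n => ∃ c : Fin nc, w (Sum.inl (i, c)) ≠ 0).card

/-- Number of nonzero entries of the region-A part of a vector on the thickened qubits. -/
noncomputable def suppACard {n nc nX r : ℕ}
    (w : ((Fin n × Fin nc) ⊕ (Fin nX × Fin r)) → ZMod 2) : ℕ :=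
  (Finset.univ.filter fun p : Fin n × Fin nc => w (Sum.inl p) ≠ 0).card

lemma mem_rowSpan_iff {ι κ : Type*} [Fintype ι] [Fintype κ] (M : Matrix ι κ (ZMod 2))
    (v : κ → ZMod 2) : v ∈ rowSpan M ↔ ∃ c : ι → ZMod 2, ∑ i, c i • M i = v :=
  Submodule.mem_span_range_iff_exists_fun _

lemma zmod2_add_self (a : ZMod 2) : a + a = 0 := by revert a; decide

lemma zmod2_eq_of_add_eq_zero {a b : ZMod 2} (h : a + b = 0) : a = b := by
  have h2 : a + (b + b) = (a + b) + b := by ring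
  rw [zmod2_add_self, add_zero, h, zero_add] at h2
  exact h2

/-- Interchange of summation for a triple product. -/
lemma swap_sum {α β : Type*} [Fintype α] [Fintype β] (a : α → ZMod 2)
    (b : α → β → ZMod 2) (d : β → ZMod 2) :
    ∑ i, a i * ∑ c, b i c * d c = ∑ c, (∑ i, a i * b i c) * d c := by
  simp_rw [Finset.mul_sum, Finset.sum_mul, mul_assoc]
  exact Finset.sum_comm

lemma exists_right_inverse {r nc : ℕ} (HC : Matrix (Fin r) (Fin nc) (ZMod 2))
    (hrank : LinearIndependent (ZMod 2) fun i : Fin r => HC i) :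
    ∃ D : Matrix (Fin nc) (Fin r) (ZMod 2), HC * D = 1 := by
  have hinj : LinearMap.ker (Matrix.toLin' HCᵀ) = ⊥ := by
    rw [LinearMap.ker_eq_bot']
    intro α hα
    have h0 : ∑ j, α j • HC j = 0 := by
      funext c
      have h1 := congrFun hα c
      simp only [Matrix.toLin'_apply, Matrix.mulVec, dotProduct,
        Matrix.transpose_apply, Pi.zero_apply] at h1
      simp only [Finset.sum_apply, Pi.smul_apply, smul_eq_mul, Pi.zero_apply]
      rw [← h1]
      exact Finset.sum_congr rfl fun j _ => mul_comm _ _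
    have h2 := Fintype.linearIndependent_iff.mp hrank α h0
    funext j; exact h2 j
  obtain ⟨g, hg⟩ := LinearMap.exists_leftInverse_of_injective _ hinj
  refine ⟨(LinearMap.toMatrix' g)ᵀ, ?_⟩
  have h3 : LinearMap.toMatrix' g * HCᵀ = 1 := by
    calc LinearMap.toMatrix' g * HCᵀ
        = LinearMap.toMatrix' (g ∘ₗ Matrix.toLin' HCᵀ) := by
          rw [LinearMap.toMatrix'_comp, LinearMap.toMatrix'_toLin']
      _ = 1 := by rw [hg, LinearMap.toMatrix'_id]
  have h4 := congrArg Matrix.transpose h3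
  simpa [Matrix.transpose_mul] using h4

/-- Rows of the kernel condition for the thickened X checks. -/
lemma thick_ker_rows {nX n r nc : ℕ} (HX : Matrix (Fin nX) (Fin n) (ZMod 2))
    (HC : Matrix (Fin r) (Fin nc) (ZMod 2))
    (z : ((Fin n × Fin nc) ⊕ (Fin nX × Fin r)) → ZMod 2)
    (hz : (thickX HX HC).mulVec z = 0) (x : Fin nX) (c : Fin nc) :
    ∑ i, HX x i * z (Sum.inl (i, c)) = ∑ j, HC j c * z (Sum.inr (x, j)) := by
  have h1 := congrFun hz (x, c)
  simp only [Matrix.mulVec, dotProduct, thickX, Matrix.of_apply,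
    Fintype.sum_sum_type, Fintype.sum_prod_type, Pi.zero_apply,
    ite_mul, zero_mul] at h1
  have e1 : (∑ i, ∑ c', if c' = c then HX x i * z (Sum.inl (i, c')) else 0)
      = ∑ i, HX x i * z (Sum.inl (i, c)) := by
    refine Finset.sum_congr rfl fun i _ => ?_
    simp
  have e2 : (∑ x', ∑ j, if x' = x then HC j c * z (Sum.inr (x', j)) else 0)
      = ∑ j, HC j c * z (Sum.inr (x, j)) := by
    rw [Finset.sum_comm]
    refine Finset.sum_congr rfl fun j _ => ?_
    simp
  rw [e1, e2] at h1
  exact zmod2_eq_of_add_eq_zero h1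

/-- Core lemma: if every `z_A f` with `f ∈ ker H_C` lies in the row span of `H_Z`,
then `z` lies in the row span of the thickened Z checks. -/
lemma key_rowspan {nX nZ n r nc : ℕ}
    (HX : Matrix (Fin nX) (Fin n) (ZMod 2)) (HZ : Matrix (Fin nZ) (Fin n) (ZMod 2))
    (HC : Matrix (Fin r) (Fin nc) (ZMod 2)) (D : Matrix (Fin nc) (Fin r) (ZMod 2))
    (hD : HC * D = 1)
    (z : ((Fin n × Fin nc) ⊕ (Fin nX × Fin r)) → ZMod 2)
    (hz : (thickX HX HC).mulVec z = 0)
    (hall : ∀ f : Fin nc → ZMod 2, HC.mulVec f = 0 →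
      (fun i => ∑ c, z (Sum.inl (i, c)) * f c) ∈ rowSpan HZ) :
    z ∈ rowSpan (thickZ HX HZ HC) := by
  classical
  set fvec : Fin nc → Fin nc → ZMod 2 :=
    fun c c' => (if c' = c then 1 else 0) + ∑ j, D c' j * HC j c with hfvec
  have hDHC : ∀ j0 j : Fin r, ∑ c', HC j0 c' * D c' j = if j0 = j then 1 else 0 := by
    intro j0 j
    have h5 := congrFun (congrFun hD j0) j
    simpa [Matrix.mul_apply, Matrix.one_apply] using h5
  have hfc : ∀ c, HC.mulVec (fvec c) = 0 := by
    intro c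
    funext j0
    simp only [Matrix.mulVec, dotProduct, hfvec, Pi.zero_apply, mul_add,
      Finset.sum_add_distrib, mul_ite, mul_one, mul_zero, Finset.sum_ite_eq',
      Finset.mem_univ, if_true]
    have h2 : ∑ c', HC j0 c' * ∑ j, D c' j * HC j c = HC j0 c := by
      rw [swap_sum (HC j0) D (fun j => HC j c)]
      simp [hDHC, ite_mul]
    rw [h2, zmod2_add_self]
  have hw : ∀ c, ∃ m : Fin nZ → ZMod 2,
      ∑ zz, m zz • HZ zz = fun i => ∑ c', z (Sum.inl (i, c')) * fvec c c' :=
    fun c => (mem_rowSpan_iff _ _).mp (hall _ (hfc c))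
  choose m hm using hw
  rw [mem_rowSpan_iff]
  refine ⟨Sum.elim (fun p : Fin nZ × Fin nc => m p.2 p.1)
    (fun q : Fin n × Fin r => ∑ c, z (Sum.inl (q.1, c)) * D c q.2), ?_⟩
  funext p
  rw [Finset.sum_apply]
  simp only [Pi.smul_apply, smul_eq_mul]
  rw [Fintype.sum_sum_type]
  cases p with
  | inl p =>
    obtain ⟨i, c⟩ := p
    have e1 : (∑ q : Fin nZ × Fin nc,
        Sum.elim (fun p : Fin nZ × Fin nc => m p.2 p.1)
          (fun q : Fin n × Fin r => ∑ c, z (Sum.inl (q.1, c)) * D c q.2) (Sum.inl q) *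
          thickZ HX HZ HC (Sum.inl q) (Sum.inl (i, c)))
        = ∑ zz, m c zz * HZ zz i := by
      rw [Fintype.sum_prod_type]
      refine Finset.sum_congr rfl fun zz _ => ?_
      simp [thickZ, mul_ite]
    have e2 : (∑ q : Fin n × Fin r,
        Sum.elim (fun p : Fin nZ × Fin nc => m p.2 p.1)
          (fun q : Fin n × Fin r => ∑ c, z (Sum.inl (q.1, c)) * D c q.2) (Sum.inr q) *
          thickZ HX HZ HC (Sum.inr q) (Sum.inl (i, c)))
        = ∑ j, (∑ c', z (Sum.inl (i, c')) * D c' j) * HC j c := by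
      rw [Fintype.sum_prod_type]
      rw [Finset.sum_comm]
      refine Finset.sum_congr rfl fun j _ => ?_
      simp [thickZ, mul_ite]
    rw [e1, e2]
    have hmi : ∑ zz, m c zz * HZ zz i = ∑ c', z (Sum.inl (i, c')) * fvec c c' := by
      have h6 := congrFun (hm c) i
      simpa [Finset.sum_apply] using h6
    rw [hmi]
    have h7 : ∑ c', z (Sum.inl (i, c')) * fvec c c'
        = z (Sum.inl (i, c)) + ∑ j, (∑ c', z (Sum.inl (i, c')) * D c' j) * HC j c := by
      simp only [hfvec, mul_add, Finset.sum_add_distrib, mul_ite, mul_one, mul_zero,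
        Finset.sum_ite_eq', Finset.mem_univ, if_true]
      rw [swap_sum (fun c' => z (Sum.inl (i, c'))) D (fun j => HC j c)]
    rw [h7, add_assoc, zmod2_add_self, add_zero]
  | inr q =>
    obtain ⟨x, j⟩ := q
    have e1 : (∑ q : Fin nZ × Fin nc,
        Sum.elim (fun p : Fin nZ × Fin nc => m p.2 p.1)
          (fun q : Fin n × Fin r => ∑ c, z (Sum.inl (q.1, c)) * D c q.2) (Sum.inl q) *
          thickZ HX HZ HC (Sum.inl q) (Sum.inr (x, j)))
        = 0 := by
      refine Finset.sum_eq_zero fun q _ => ?_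
      simp [thickZ]
    have e2 : (∑ q : Fin n × Fin r,
        Sum.elim (fun p : Fin nZ × Fin nc => m p.2 p.1)
          (fun q : Fin n × Fin r => ∑ c, z (Sum.inl (q.1, c)) * D c q.2) (Sum.inr q) *
          thickZ HX HZ HC (Sum.inr q) (Sum.inr (x, j)))
        = ∑ i, (∑ c, z (Sum.inl (i, c)) * D c j) * HX x i := by
      rw [Fintype.sum_prod_type]
      refine Finset.sum_congr rfl fun i _ => ?_
      simp [thickZ, mul_ite]
    rw [e1, e2, zero_add]
    calc ∑ i, (∑ c, z (Sum.inl (i, c)) * D c j) * HX x i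
        = ∑ i, HX x i * ∑ c, z (Sum.inl (i, c)) * D c j := by
          exact Finset.sum_congr rfl fun i _ => mul_comm _ _
      _ = ∑ c, (∑ i, HX x i * z (Sum.inl (i, c))) * D c j :=
          swap_sum (HX x) (fun i c => z (Sum.inl (i, c))) (fun c => D c j)
      _ = ∑ c, (∑ j0, HC j0 c * z (Sum.inr (x, j0))) * D c j := by
          simp_rw [thick_ker_rows HX HC z hz]
      _ = ∑ c, (∑ j0, z (Sum.inr (x, j0)) * HC j0 c) * D c j := by
          refine Finset.sum_congr rfl fun c _ => ?_
          congr 1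
          exact Finset.sum_congr rfl fun j0 _ => mul_comm _ _
      _ = ∑ j0, z (Sum.inr (x, j0)) * ∑ c, HC j0 c * D c j := by
          rw [swap_sum (fun j0 => z (Sum.inr (x, j0))) (fun j0 c => HC j0 c) (fun c => D c j)]
      _ = z (Sum.inr (x, j)) := by
          simp [hDHC, mul_ite]

/-- **Component weight of Z logicals of the thickened code:** every Z logical operator
`z` of the thickened code has `|z_A|_R ≥ d_Z`, and in particular `|supp(z_A)| ≥ d_Z`. -/
theorem thickened_Z_component_weight {nX nZ n r nc : ℕ}
    (HX : Matrix (Fin nX) (Fin n) (ZMod 2)) (HZ : Matrix (Fin nZ) (Fin n) (ZMod 2))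
    (HC : Matrix (Fin r) (Fin nc) (ZMod 2))
    (hcss : HX * HZ.transpose = 0)
    (hrank : LinearIndependent (ZMod 2) (fun i : Fin r => HC i))
    (hlog : (logicalSet HX HZ).Nonempty) :
    ∀ z ∈ logicalSet (thickX HX HC) (thickZ HX HZ HC),
      minWt (logicalSet HX HZ) ≤ rowWtA z ∧ minWt (logicalSet HX HZ) ≤ suppACard z := by
  classical
  intro z hzlog
  obtain ⟨hzker, hznot⟩ := hzlog
  obtain ⟨Dm, hD⟩ := exists_right_inverse HC hrank
  have hex : ∃ f : Fin nc → ZMod 2, HC.mulVec f = 0 ∧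
      (fun i => ∑ c, z (Sum.inl (i, c)) * f c) ∉ rowSpan HZ := by
    by_contra h
    push_neg at h
    exact hznot (key_rowspan HX HZ HC Dm hD z hzker fun f hf => h f hf)
  obtain ⟨f, hf, hwnot⟩ := hex
  set w : Fin n → ZMod 2 := fun i => ∑ c, z (Sum.inl (i, c)) * f c with hwdef
  have hwker : HX.mulVec w = 0 := by
    funext x
    simp only [Matrix.mulVec, dotProduct, hwdef, Pi.zero_apply]
    calc ∑ i, HX x i * ∑ c, z (Sum.inl (i, c)) * f c
        = ∑ c, (∑ i, HX x i * z (Sum.inl (i, c))) * f c :=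
          swap_sum (HX x) (fun i c => z (Sum.inl (i, c))) f
      _ = ∑ c, (∑ j, HC j c * z (Sum.inr (x, j))) * f c := by
          simp_rw [thick_ker_rows HX HC z hzker]
      _ = ∑ j, z (Sum.inr (x, j)) * ∑ c, HC j c * f c := by
          rw [swap_sum (fun j => z (Sum.inr (x, j))) (fun j c => HC j c) f]
          refine Finset.sum_congr rfl fun c _ => ?_
          congr 1
          exact Finset.sum_congr rfl fun j _ => mul_comm _ _
      _ = 0 := by
          have : ∀ j, ∑ c, HC j c * f c = 0 := fun j => congrFun hf j
          simp [this]
  have hwlog : w ∈ logicalSet HX HZ := ⟨hwker, hwnot⟩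
  have h1 : minWt (logicalSet HX HZ) ≤ hammingNorm w :=
    Nat.sInf_le ⟨w, hwlog, rfl⟩
  have h2 : hammingNorm w ≤ rowWtA z := by
    rw [hammingNorm, rowWtA]
    apply Finset.card_le_card
    intro i hi
    simp only [Finset.mem_filter, Finset.mem_univ, true_and] at hi ⊢
    by_contra hcon
    push_neg at hcon
    apply hi
    simp only [hwdef]
    exact Finset.sum_eq_zero fun c _ => by rw [hcon c, zero_mul]
  have h3 : rowWtA z ≤ suppACard z := by
    rw [rowWtA, suppACard]
    have himg : (Finset.univ.filter fun i : Fin n => ∃ c : Fin nc, z (Sum.inl (i, c)) ≠ 0)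
        = (Finset.univ.filter fun p : Fin n × Fin nc => z (Sum.inl p) ≠ 0).image Prod.fst := by
      ext i
      simp only [Finset.mem_filter, Finset.mem_univ, true_and, Finset.mem_image]
      constructor
      · rintro ⟨c, hc⟩; exact ⟨(i, c), by simpa using hc, rfl⟩
      · rintro ⟨⟨i', c⟩, hp, rfl⟩
        exact ⟨c, by simpa using hp⟩
    rw [himg]
    exact Finset.card_image_le
  exact ⟨h1.trans h2, (h1.trans h2).trans h3⟩
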